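/- Let (λ_ℓ) and (c_ℓ) be sequences of nonnegative reals such that for all s in (0, T], ∑_ℓ e^{-λ_ℓ s/2} c_ℓ ≤ A / s^{m/2}. Then for any t in (0, T] and λ ≥ m/t, the tail satisfies ∑_{ℓ : λ_ℓ ≥ λ} e^{-λ_ℓ t/2} c_ℓ ≤ e^{-λ t/2} * A * (2e/m)^{m/2} * λ^{m/2}. -/

import Mathlib

/-!
Split `e^{-λ_ℓ t/2} = e^{-λ_ℓ (t-s)/2} e^{-λ_ℓ s/2}`. On the tail `λ_ℓ ≥ λ` the first factor is at most
`e^{-λ (t-s)/2}`, and the remaining sum is bounded by the hypothesis at `s`. The choice `s = m/λ`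
(admissible since `λ ≥ m/t`) turns `e^{λ s/2} A s^{-m/2}` into `A (eλ/m)^{m/2}`.
-/

open Real

lemma exp_neg_mul_le_exp_mul_exp {lam lam0 s t : ℝ} (hlam : lam0 ≤ lam) (hst : s ≤ t) :
    exp (-lam * t / 2) ≤ exp (-lam0 * (t - s) / 2) * exp (-lam * s / 2) := by
  rw [← exp_add, exp_le_exp]
  nlinarith [mul_le_mul_of_nonneg_right hlam (sub_nonneg.mpr hst)]

lemma tsum_tail_le_exp_mul_tsum {ι : Type*} (lam c : ι → ℝ) (hc : ∀ i, 0 ≤ c i)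
    {s t : ℝ} (lam0 : ℝ) (hst : s ≤ t) (hsum : Summable fun i => exp (-lam i * s / 2) * c i) :
    ∑' i, (if lam0 ≤ lam i then exp (-lam i * t / 2) * c i else 0) ≤
      exp (-lam0 * (t - s) / 2) * ∑' i, exp (-lam i * s / 2) * c i := by
  have hpoint : ∀ i, (if lam0 ≤ lam i then exp (-lam i * t / 2) * c i else 0) ≤
      exp (-lam0 * (t - s) / 2) * (exp (-lam i * s / 2) * c i) := by
    intro i
    split_ifs with h
    · rw [← mul_assoc]
      exact mul_le_mul_of_nonneg_right (exp_neg_mul_le_exp_mul_exp h hst) (hc i)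
    · exact mul_nonneg (exp_pos _).le (mul_nonneg (exp_pos _).le (hc i))
  have hnonneg : ∀ i, 0 ≤ (if lam0 ≤ lam i then exp (-lam i * t / 2) * c i else 0) := by
    intro i
    split_ifs
    exacts [mul_nonneg (exp_pos _).le (hc i), le_rfl]
  have hmajor := hsum.mul_left (exp (-lam0 * (t - s) / 2))
  rw [← tsum_mul_left]
  exact (hmajor.of_nonneg_of_le hnonneg hpoint).tsum_le_tsum hpoint hmajor

lemma exp_mul_div_rpow_at_opt {a lam0 : ℝ} (ha : 0 < a) (hlam0 : 0 < lam0) (t A : ℝ) :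
    exp (-lam0 * (t - a / lam0) / 2) * (A / (a / lam0) ^ (a / 2)) =
      exp (-lam0 * t / 2) * A * (exp 1 / a) ^ (a / 2) * lam0 ^ (a / 2) := by
  have hexp : exp (-lam0 * (t - a / lam0) / 2) = exp (-lam0 * t / 2) * exp 1 ^ (a / 2) := by
    rw [exp_one_rpow, ← exp_add]
    congr 1
    field_simp
    ring
  rw [hexp, div_rpow ha.le hlam0.le, div_rpow (exp_pos 1).le ha.le]
  field_simp

theorem stmt_7_general (m : ℕ) (hm : 1 ≤ m) (T A : ℝ) (hA : 0 < A)
    (lam c : ℕ → ℝ) (hc : ∀ ℓ, 0 ≤ c ℓ)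
    (hsum : ∀ s : ℝ, 0 < s → s ≤ T → Summable (fun ℓ => Real.exp (-lam ℓ * s / 2) * c ℓ))
    (hbound : ∀ s : ℝ, 0 < s → s ≤ T →
      ∑' ℓ, Real.exp (-lam ℓ * s / 2) * c ℓ ≤ A / s ^ ((m : ℝ) / 2))
    (t : ℝ) (ht0 : 0 < t) (htT : t ≤ T) (lam0 : ℝ) (hlam0 : (m : ℝ) / t ≤ lam0) :
    ∑' ℓ, (if lam0 ≤ lam ℓ then Real.exp (-lam ℓ * t / 2) * c ℓ else 0) ≤
      Real.exp (-lam0 * t / 2) * A * (2 * Real.exp 1 / m) ^ ((m : ℝ) / 2) *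
        lam0 ^ ((m : ℝ) / 2) := by
  have hm0 : (0 : ℝ) < m := by exact_mod_cast hm
  have hlam0pos : 0 < lam0 := (div_pos hm0 ht0).trans_le hlam0
  set s : ℝ := m / lam0
  have hs0 : 0 < s := div_pos hm0 hlam0pos
  have hst : s ≤ t := by
    rwa [div_le_iff₀ hlam0pos, mul_comm, ← div_le_iff₀ ht0]
  have hsT : s ≤ T := hst.trans htT
  calc ∑' ℓ, (if lam0 ≤ lam ℓ then exp (-lam ℓ * t / 2) * c ℓ else 0)
      ≤ exp (-lam0 * (t - s) / 2) * ∑' ℓ, exp (-lam ℓ * s / 2) * c ℓ :=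
        tsum_tail_le_exp_mul_tsum lam c hc lam0 hst (hsum s hs0 hsT)
    _ ≤ exp (-lam0 * (t - s) / 2) * (A / s ^ ((m : ℝ) / 2)) :=
        mul_le_mul_of_nonneg_left (hbound s hs0 hsT) (exp_pos _).le
    _ = exp (-lam0 * t / 2) * A * (exp 1 / m) ^ ((m : ℝ) / 2) * lam0 ^ ((m : ℝ) / 2) :=
        exp_mul_div_rpow_at_opt hm0 hlam0pos t A
    _ ≤ exp (-lam0 * t / 2) * A * (2 * exp 1 / m) ^ ((m : ℝ) / 2) * lam0 ^ ((m : ℝ) / 2) := by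
        gcongr
        linarith [exp_pos 1]

theorem stmt_7 (m : ℕ) (hm : 1 ≤ m) (T A : ℝ) (hT : 0 < T) (hA : 0 < A)
    (lam c : ℕ → ℝ) (hlam : ∀ ℓ, 0 ≤ lam ℓ) (hc : ∀ ℓ, 0 ≤ c ℓ)
    (hsum : ∀ s : ℝ, 0 < s → s ≤ T → Summable (fun ℓ => Real.exp (-lam ℓ * s / 2) * c ℓ))
    (hbound : ∀ s : ℝ, 0 < s → s ≤ T →
      ∑' ℓ, Real.exp (-lam ℓ * s / 2) * c ℓ ≤ A / s ^ ((m : ℝ) / 2))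
    (t : ℝ) (ht0 : 0 < t) (htT : t ≤ T) (lam0 : ℝ) (hlam0 : (m : ℝ) / t ≤ lam0) :
    ∑' ℓ, (if lam0 ≤ lam ℓ then Real.exp (-lam ℓ * t / 2) * c ℓ else 0) ≤
      Real.exp (-lam0 * t / 2) * A * (2 * Real.exp 1 / m) ^ ((m : ℝ) / 2) *
        lam0 ^ ((m : ℝ) / 2) :=
  stmt_7_general m hm T A hA lam c hc hsum hbound t ht0 htT lam0 hlam0
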